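/- Let T > 0, let ν : [0,T] → ℝ be Borel measurable and bounded, let z : [0,T] → [0,∞) be Borel measurable and integrable, let ξ : [0,T] → ℝ be Borel measurable and bounded with ξ(0) = 0, and let b : [0,T] → ℝ be Borel measurable, bounded, and satisfy b(t) = b(0) + ∫₀ᵗ ν(s) b(s) ds + ∫₀ᵗ z(s) ds + ξ(t) for all t ∈ [0,T]. Then for all t ∈ [0,T]: b(t) ≥ b(0) exp(∫₀ᵗ ν(s) ds) + ξ(t) + ∫₀ᵗ ν(s) exp(∫ₛᵗ ν(r) dr) ξ(s) ds. -/

import Mathlib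

/-!
With `F(t) = ∫₀ᵗ ν`, the function `c = b - ξ = b 0 + ∫₀ᵗ (ν b + z)` is absolutely continuous and
satisfies `c' = ν c + (ν ξ + z)` almost everywhere, so `(e^{-F} c)' = e^{-F} (ν ξ + z)` a.e.
The fundamental theorem of calculus for absolutely continuous functions then gives the
variation-of-constants formula
`b t = e^{F t} b 0 + ξ t + ∫₀ᵗ e^{F t - F s} (ν s ξ s + z s) ds`,
and dropping the nonnegative contribution of `z` gives the bound.
-/

open MeasureTheory Set

theorem LipschitzOnWith.comp_absolutelyContinuousOnInterval {X Y : Type*} [PseudoMetricSpace X]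
    [PseudoMetricSpace Y] {g : X → Y} {K : NNReal} {s : Set X} {f : ℝ → X} {a b : ℝ}
    (hg : LipschitzOnWith K g s) (hf : AbsolutelyContinuousOnInterval f a b)
    (hfs : MapsTo f (uIcc a b) s) : AbsolutelyContinuousOnInterval (g ∘ f) a b := by
  rw [absolutelyContinuousOnInterval_iff] at hf ⊢
  intro ε hε
  obtain ⟨δ, hδ, hfδ⟩ := hf (ε / (K + 1)) (by positivity)
  refine ⟨δ, hδ, fun E hE hEδ => ?_⟩
  calc ∑ i ∈ Finset.range E.1, dist (g (f (E.2 i).1)) (g (f (E.2 i).2))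
      ≤ ∑ i ∈ Finset.range E.1, K * dist (f (E.2 i).1) (f (E.2 i).2) :=
        Finset.sum_le_sum fun i hi =>
          hg.dist_le_mul _ (hfs (hE.1 i hi).1) _ (hfs (hE.1 i hi).2)
    _ = K * ∑ i ∈ Finset.range E.1, dist (f (E.2 i).1) (f (E.2 i).2) := (Finset.mul_sum ..).symm
    _ ≤ K * (ε / (K + 1)) := by gcongr; exact (hfδ E hE hEδ).le
    _ < ε := by
      rw [mul_div_assoc', div_lt_iff₀ (by positivity)]
      nlinarith

theorem ContDiff.comp_absolutelyContinuousOnInterval {E F : Type*} [NormedAddCommGroup E]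
    [NormedSpace ℝ E] [ProperSpace E] [NormedAddCommGroup F] [NormedSpace ℝ F] {g : E → F}
    {f : ℝ → E} {a b : ℝ} (hg : ContDiff ℝ 1 g) (hf : AbsolutelyContinuousOnInterval f a b) :
    AbsolutelyContinuousOnInterval (g ∘ f) a b := by
  obtain ⟨C, hC⟩ := hf.exists_bound
  obtain ⟨K, hK⟩ := hg.contDiffOn.exists_lipschitzOnWith one_ne_zero (convex_closedBall 0 C)
    (isCompact_closedBall 0 C)
  exact hK.comp_absolutelyContinuousOnInterval hf fun x hx => mem_closedBall_zero_iff.2 (hC x hx)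

theorem AbsolutelyContinuousOnInterval.integral_eq_sub_of_ae_hasDerivAt {f f' : ℝ → ℝ} {a b : ℝ}
    (hf : AbsolutelyContinuousOnInterval f a b)
    (hderiv : ∀ᵐ x, x ∈ uIcc a b → HasDerivAt f (f' x) x) :
    ∫ x in a..b, f' x = f b - f a := by
  rw [← hf.integral_deriv_eq_sub]
  refine intervalIntegral.integral_congr_ae ?_
  filter_upwards [hderiv] with x hx hxab
  exact (hx (uIoc_subset_uIcc hxab)).deriv.symm

open Real in
theorem AbsolutelyContinuousOnInterval.variation_of_constants
    {ν w c : ℝ → ℝ} {a t : ℝ} (hν : IntervalIntegrable ν volume a t)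
    (hc : AbsolutelyContinuousOnInterval c a t)
    (hderiv : ∀ᵐ s, s ∈ uIcc a t → HasDerivAt c (ν s * c s + w s) s) :
    c t = exp (∫ s in a..t, ν s) * c a + ∫ s in a..t, exp (∫ r in s..t, ν r) * w s := by
  set F : ℝ → ℝ := fun x => ∫ s in a..x, ν s with hF
  have hF_ac : AbsolutelyContinuousOnInterval F a t :=
    hν.absolutelyContinuousOnInterval_intervalIntegral left_mem_uIcc
  have hG_ac : AbsolutelyContinuousOnInterval (fun x => exp (-F x) * c x) a t :=
    (contDiff_exp.comp_absolutelyContinuousOnInterval hF_ac.neg).fun_mul hc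
  have hG_deriv : ∀ᵐ s, s ∈ uIcc a t →
      HasDerivAt (fun x => exp (-F x) * c x) (exp (-F s) * w s) s := by
    filter_upwards [hν.ae_hasDerivAt_integral, hderiv] with s hFs hcs hs
    refine (((hFs hs a left_mem_uIcc).fun_neg.exp).fun_mul (hcs hs)).congr_deriv ?_
    simp only [hF]
    ring
  have hFTC := hG_ac.integral_eq_sub_of_ae_hasDerivAt hG_deriv
  have hshift : EqOn (fun s => exp (∫ r in s..t, ν r) * w s)
      (fun s => exp (F t) * (exp (-F s) * w s)) (uIcc a t) := fun s hs => by
    dsimp only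
    rw [← intervalIntegral.integral_interval_sub_left hν (hν.mono_set (uIcc_subset_uIcc_left hs)),
      sub_eq_add_neg, exp_add, mul_assoc]
  rw [intervalIntegral.integral_congr hshift, intervalIntegral.integral_const_mul, hFTC]
  simp only [hF, intervalIntegral.integral_same, neg_zero, exp_zero, one_mul]
  rw [mul_sub, ← mul_assoc, ← exp_add, add_neg_cancel, exp_zero, one_mul]
  ring

open Real in
theorem variation_of_constants_of_integral_eq {ν z ξ b : ℝ → ℝ} {a t : ℝ}
    (hν : IntervalIntegrable ν volume a t)
    (hνb : IntervalIntegrable (fun s => ν s * b s) volume a t)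
    (hz : IntervalIntegrable z volume a t)
    (hb : ∀ s ∈ uIcc a t,
      b s = b a + (∫ r in a..s, ν r * b r) + (∫ r in a..s, z r) + ξ s) :
    b t = exp (∫ s in a..t, ν s) * b a + ξ t
      + ∫ s in a..t, exp (∫ r in s..t, ν r) * (ν s * ξ s + z s) := by
  set c : ℝ → ℝ := fun s => b a + (∫ r in a..s, ν r * b r) + ∫ r in a..s, z r with hc
  have hc_ac : AbsolutelyContinuousOnInterval c a t :=
    ((LipschitzWith.const (b a)).lipschitzOnWith.absolutelyContinuousOnInterval.add
      (hνb.absolutelyContinuousOnInterval_intervalIntegral left_mem_uIcc)).add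
      (hz.absolutelyContinuousOnInterval_intervalIntegral left_mem_uIcc)
  -- `b = c + ξ` on `[a, t]`, so `c' = ν b + z = ν c + (ν ξ + z)`.
  have hc_deriv : ∀ᵐ s, s ∈ uIcc a t → HasDerivAt c (ν s * c s + (ν s * ξ s + z s)) s := by
    filter_upwards [hνb.ae_hasDerivAt_integral, hz.ae_hasDerivAt_integral] with s hνb_s hz_s hs
    refine (((hνb_s hs a left_mem_uIcc).const_add (b a)).add
      (hz_s hs a left_mem_uIcc)).congr_deriv ?_
    rw [hb s hs]
    ring
  have hc_a : c a = b a := by simp only [hc, intervalIntegral.integral_same, add_zero]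
  rw [hb t right_mem_uIcc]
  change c t + ξ t = _
  rw [hc_ac.variation_of_constants hν hc_deriv, hc_a]
  ring

theorem intervalIntegrable_of_abs_le {f : ℝ → ℝ} {a b C : ℝ} (hf : Measurable f)
    (hC : ∀ s ∈ uIcc a b, |f s| ≤ C) : IntervalIntegrable f volume a b :=
  intervalIntegrable_const.mono_fun' hf.aestronglyMeasurable <|
    ae_restrict_of_forall_mem measurableSet_uIoc fun s hs => hC s (uIoc_subset_uIcc hs)

theorem intervalIntegrable_mul_of_abs_le {f g : ℝ → ℝ} {a b Cf Cg : ℝ} (hf : Measurable f)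
    (hg : Measurable g) (hfC : ∀ s ∈ uIcc a b, |f s| ≤ Cf) (hgC : ∀ s ∈ uIcc a b, |g s| ≤ Cg) :
    IntervalIntegrable (fun s => f s * g s) volume a b :=
  intervalIntegrable_of_abs_le (hf.mul hg) fun s hs => by
    rw [abs_mul]
    exact mul_le_mul (hfC s hs) (hgC s hs) (abs_nonneg _) ((abs_nonneg _).trans (hfC s hs))

open Real in
theorem duhamel_lower_bound_general
    (T : ℝ)
    (ν : ℝ → ℝ) (hν_meas : Measurable ν)
    (hν_bdd : ∃ C : ℝ, ∀ s ∈ Set.Icc (0:ℝ) T, |ν s| ≤ C)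
    (z : ℝ → ℝ)
    (hz_nonneg : ∀ s ∈ Set.Icc (0:ℝ) T, 0 ≤ z s)
    (hz_int : IntervalIntegrable z volume 0 T)
    (ξ : ℝ → ℝ) (hξ_meas : Measurable ξ)
    (hξ_bdd : ∃ C : ℝ, ∀ s ∈ Set.Icc (0:ℝ) T, |ξ s| ≤ C)
    (b : ℝ → ℝ) (hb_meas : Measurable b)
    (hb_bdd : ∃ C : ℝ, ∀ s ∈ Set.Icc (0:ℝ) T, |b s| ≤ C)
    (hb : ∀ t ∈ Set.Icc (0:ℝ) T,
      b t = b 0 + (∫ s in (0:ℝ)..t, ν s * b s) + (∫ s in (0:ℝ)..t, z s) + ξ t) :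
    ∀ t ∈ Set.Icc (0:ℝ) T,
      b 0 * Real.exp (∫ s in (0:ℝ)..t, ν s) + ξ t
        + (∫ s in (0:ℝ)..t, ν s * Real.exp (∫ r in s..t, ν r) * ξ s) ≤ b t := by
  intro t ht
  obtain ⟨Cν, hCν⟩ := hν_bdd
  obtain ⟨Cξ, hCξ⟩ := hξ_bdd
  obtain ⟨Cb, hCb⟩ := hb_bdd
  have hsub : uIcc 0 t ⊆ Icc 0 T := uIcc_subset_Icc ⟨le_rfl, ht.1.trans ht.2⟩ ht
  have hν := intervalIntegrable_of_abs_le hν_meas fun s hs => hCν s (hsub hs)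
  have hνb := intervalIntegrable_mul_of_abs_le hν_meas hb_meas (fun s hs => hCν s (hsub hs))
    fun s hs => hCb s (hsub hs)
  have hνξ := intervalIntegrable_mul_of_abs_le hν_meas hξ_meas (fun s hs => hCν s (hsub hs))
    fun s hs => hCξ s (hsub hs)
  have hz : IntervalIntegrable z volume 0 t :=
    hz_int.mono_set (uIcc_subset_uIcc left_mem_uIcc (mem_uIcc_of_le ht.1 ht.2))
  have hexp : ContinuousOn (fun s => exp (∫ r in s..t, ν r)) (uIcc 0 t) :=
    (intervalIntegral.continuousOn_primitive_interval_left
      ((intervalIntegrable_iff' (by finiteness)).1 hν)).rexp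
  have hz_part : 0 ≤ ∫ s in (0:ℝ)..t, exp (∫ r in s..t, ν r) * z s :=
    intervalIntegral.integral_nonneg ht.1 fun s hs =>
      mul_nonneg (exp_pos _).le (hz_nonneg s (hsub (Icc_subset_uIcc hs)))
  have hformula := variation_of_constants_of_integral_eq hν hνb hz fun s hs => hb s (hsub hs)
  simp only [mul_add] at hformula
  rw [hformula,
    intervalIntegral.integral_add (hνξ.continuousOn_mul hexp) (hz.continuousOn_mul hexp)]
  have hreorder : ∫ s in (0:ℝ)..t, ν s * exp (∫ r in s..t, ν r) * ξ s
      = ∫ s in (0:ℝ)..t, exp (∫ r in s..t, ν r) * (ν s * ξ s) :=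
    intervalIntegral.integral_congr fun s _ => by ring
  linarith

/-- Variation-of-constants (Duhamel) lower bound: if
`b(t) = b(0) + ∫₀ᵗ ν(s) b(s) ds + ∫₀ᵗ z(s) ds + ξ(t)` on `[0,T]` with `z ≥ 0`,
then `b(t) ≥ b(0) e^{∫₀ᵗ ν} + ξ(t) + ∫₀ᵗ ν(s) e^{∫ₛᵗ ν} ξ(s) ds`. -/
theorem duhamel_lower_bound
    (T : ℝ) (hT : 0 < T)
    (ν : ℝ → ℝ) (hν_meas : Measurable ν)
    (hν_bdd : ∃ C : ℝ, ∀ s ∈ Set.Icc (0:ℝ) T, |ν s| ≤ C)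
    (z : ℝ → ℝ) (hz_meas : Measurable z)
    (hz_nonneg : ∀ s ∈ Set.Icc (0:ℝ) T, 0 ≤ z s)
    (hz_int : IntervalIntegrable z volume 0 T)
    (ξ : ℝ → ℝ) (hξ_meas : Measurable ξ)
    (hξ_bdd : ∃ C : ℝ, ∀ s ∈ Set.Icc (0:ℝ) T, |ξ s| ≤ C)
    (hξ0 : ξ 0 = 0)
    (b : ℝ → ℝ) (hb_meas : Measurable b)
    (hb_bdd : ∃ C : ℝ, ∀ s ∈ Set.Icc (0:ℝ) T, |b s| ≤ C)
    (hb : ∀ t ∈ Set.Icc (0:ℝ) T,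
      b t = b 0 + (∫ s in (0:ℝ)..t, ν s * b s) + (∫ s in (0:ℝ)..t, z s) + ξ t) :
    ∀ t ∈ Set.Icc (0:ℝ) T,
      b 0 * Real.exp (∫ s in (0:ℝ)..t, ν s) + ξ t
        + (∫ s in (0:ℝ)..t, ν s * Real.exp (∫ r in s..t, ν r) * ξ s) ≤ b t :=
  duhamel_lower_bound_general T ν hν_meas hν_bdd z hz_nonneg hz_int ξ hξ_meas hξ_bdd b hb_meas
    hb_bdd hb
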